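/- Given a clMMMC (π^R, π^S, A^R(·), A^S(·); γ), define the HMM hidden-state kernel W on [S]×[R] by W((s,r),(s',r')) = a^S_{ss'}(γ(r)) · a^R_{rr'}(s), initial distribution π(s,r) = π^S_s · π^R_r, and deterministic emission map (s,r) ↦ r. Then for every observation sequence (r_0,…,r_T), the probability that the visible chain of the clMMMC produces (r_0,…,r_T) equals the probability that the HMM's emitted sequence is (r_0,…,r_T); explicitly, both equal Σ_{s_0,…,s_T} π^R_{r_0} π^S_{s_0} ∏_{t=1}^{T} a^S_{s_{t-1}s_t}(γ(r_{t-1})) a^R_{r_{t-1}r_t}(s_{t-1}). -/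
import Mathlib


/-- Proposition 5: a clMMMC `(π^R, π^S, A^R(·), A^S(·); γ)` defines the same visible
process as the HMM on the product state space `[S] × [R]` with hidden-state kernel
`W((s,r),(s',r')) = a^S_{ss'}(γ(r)) · a^R_{rr'}(s)`, initial distribution
`π(s,r) = π^S_s π^R_r`, and deterministic emission `(s,r) ↦ r`: for every
observation sequence `(r_0,…,r_T)`, both the clMMMC probability of observing it and
the HMM probability of emitting it equal
`Σ_{s_0,…,s_T} π^R_{r_0} π^S_{s_0} ∏_{t=1}^{T} a^S_{s_{t-1}s_t}(γ(r_{t-1})) a^R_{r_{t-1}r_t}(s_{t-1})`. -/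
theorem clMMMC_eq_HMM {R S p : ℕ} (piR : Fin R → ℝ) (piS : Fin S → ℝ)
    (AR : Fin S → Matrix (Fin R) (Fin R) ℝ) (AS : Fin p → Matrix (Fin S) (Fin S) ℝ)
    (γ : Fin R → Fin p) (T : ℕ) (r : Fin (T + 1) → Fin R) :
    -- clMMMC: marginalize the joint trajectory probability over latent trajectories
    (∑ s : Fin (T + 1) → Fin S,
        piR (r 0) * piS (s 0) *
          ∏ t : Fin T, AS (γ (r t.castSucc)) (s t.castSucc) (s t.succ) *
            AR (s t.castSucc) (r t.castSucc) (r t.succ))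
      = (∑ s : Fin (T + 1) → Fin S,
          piR (r 0) * piS (s 0) *
            ∏ t : Fin T, AS (γ (r t.castSucc)) (s t.castSucc) (s t.succ) *
              AR (s t.castSucc) (r t.castSucc) (r t.succ)) ∧
    (∑ q : Fin (T + 1) → Fin S × Fin R,
        (piS (q 0).1 * piR (q 0).2) *
          (∏ t : Fin T, AS (γ ((q t.castSucc).2)) (q t.castSucc).1 (q t.succ).1 *
            AR (q t.castSucc).1 (q t.castSucc).2 (q t.succ).2) *
          ∏ t : Fin (T + 1), (if (q t).2 = r t then (1 : ℝ) else 0))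
      = (∑ s : Fin (T + 1) → Fin S,
          piR (r 0) * piS (s 0) *
            ∏ t : Fin T, AS (γ (r t.castSucc)) (s t.castSucc) (s t.succ) *
              AR (s t.castSucc) (r t.castSucc) (r t.succ)) := by

  refine ⟨rfl, ?_⟩
  let e : ((Fin (T + 1) → Fin S) × (Fin (T + 1) → Fin R)) ≃ (Fin (T + 1) → Fin S × Fin R) :=
    (Equiv.arrowProdEquivProdArrow _ _ _).symm
  have he : ∀ (s : Fin (T + 1) → Fin S) (ρ : Fin (T + 1) → Fin R) (t : Fin (T + 1)),
      e (s, ρ) t = (s t, ρ t) := fun _ _ _ => rfl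
  rw [← e.sum_comp]
  rw [Fintype.sum_prod_type]
  have key : ∀ s : Fin (T + 1) → Fin S,
      (∑ ρ : Fin (T + 1) → Fin R,
        (piS ((e (s, ρ)) 0).1 * piR ((e (s, ρ)) 0).2) *
          (∏ t : Fin T, AS (γ (((e (s, ρ)) t.castSucc).2)) ((e (s, ρ)) t.castSucc).1 ((e (s, ρ)) t.succ).1 *
            AR ((e (s, ρ)) t.castSucc).1 ((e (s, ρ)) t.castSucc).2 ((e (s, ρ)) t.succ).2) *
          ∏ t : Fin (T + 1), (if ((e (s, ρ)) t).2 = r t then (1 : ℝ) else 0))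
      = piR (r 0) * piS (s 0) *
          ∏ t : Fin T, AS (γ (r t.castSucc)) (s t.castSucc) (s t.succ) *
            AR (s t.castSucc) (r t.castSucc) (r t.succ) := by
    intro s
    rw [Finset.sum_eq_single r]
    · simp [he, mul_comm (piS (s 0)) (piR (r 0))]
    · intro ρ _ hne
      have : ∃ t, ρ t ≠ r t := by
        by_contra h
        push_neg at h
        exact hne (funext h)
      obtain ⟨t, ht⟩ := this
      have : (∏ t : Fin (T + 1), (if ((e (s, ρ)) t).2 = r t then (1 : ℝ) else 0)) = 0 := by
        apply Finset.prod_eq_zero (Finset.mem_univ t)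
        simp [he, ht]
      rw [this, mul_zero]
    · intro h
      exact absurd (Finset.mem_univ r) h
  exact Finset.sum_congr rfl fun s _ => key s
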